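/- arXiv:math/0312515 — 8 statements merged into one kernel-verified Lean document; each statement's English description precedes it below -/
import Mathlib

section
/- Let α > 1 and β > 1 be real numbers and d a positive integer. Suppose that for every (n, m) ∈ ℤ² \ {(0,0)} with αⁿβᵐ > 1, the real number αⁿβᵐ is the Salem number of some Salem polynomial of degree at most d. Then α and β are multiplicatively dependent, i.e. there exists (n, m) ∈ ℤ² \ {(0,0)} with αⁿβᵐ = 1. -/
/-!
Suppose `α` and `β` are multiplicatively independent. For every `k ≥ 1` some `β ^ m` moves
`α ^ k` into `[1, β)`, and independence makes the resulting numbers `α ^ k * β ^ m` pairwise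
distinct and different from `1`. Each of them is then a Salem number of degree at most `d`, so it
is a root of a monic integer polynomial of degree at most `d` all of whose complex roots have
modulus at most `β`. The coefficients of such polynomials are bounded, so there are only
finitely many of them, and hence only finitely many such roots: a contradiction.
-/

/-- `Φ` is a Salem polynomial with Salem number `α`: a monic irreducible polynomial in `ℤ[t]`
whose complex roots consist of the two real roots `α > 1` and `1/α`, together with the
remaining roots on the unit circle. -/
def IsSalemWithNumber (Φ : Polynomial ℤ) (α : ℝ) : Prop :=
  Φ.Monic ∧ Irreducible Φ ∧ 1 < α ∧
    ∃ s : Multiset ℂ,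
      (Φ.map (Int.castRingHom ℂ)).roots = (α : ℂ) ::ₘ ((α : ℂ)⁻¹) ::ₘ s ∧
      ∀ z ∈ s, ‖z‖ = 1

open Polynomial Set

theorem exists_mul_zpow_mem_Ico {K : Type*} [Field K] [LinearOrder K] [IsStrictOrderedRing K]
    [Archimedean K] {x y : K} (hx : 0 < x) (hy : 1 < y) : ∃ m : ℤ, x * y ^ m ∈ Ico 1 y := by
  obtain ⟨n, hn_le, hlt_n⟩ := exists_mem_Ico_zpow hx hy
  have hyn : 0 < y ^ n := zpow_pos (zero_lt_one.trans hy) n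
  refine ⟨-n, ?_, ?_⟩
  · rw [zpow_neg, ← div_eq_mul_inv, one_le_div hyn]
    exact hn_le
  · rw [zpow_neg, ← div_eq_mul_inv, div_lt_iff₀ hyn, ← zpow_one_add₀ (zero_lt_one.trans hy).ne',
      add_comm]
    exact hlt_n

theorem exists_zpow_mul_zpow_eq_one_of_finite {K : Type*} [Field K] [LinearOrder K]
    [IsStrictOrderedRing K] [Archimedean K] {α β : K} (hα : 0 < α) (hβ : 1 < β)
    (hfin : {x | x ∈ Ioo 1 β ∧ ∃ n m : ℤ, (n, m) ≠ (0, 0) ∧ α ^ n * β ^ m = x}.Finite) :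
    ∃ n m : ℤ, (n, m) ≠ (0, 0) ∧ α ^ n * β ^ m = 1 := by
  by_contra! hind
  choose m hm using fun k : ℕ => exists_mul_zpow_mem_Ico (zpow_pos hα ((k : ℤ) + 1)) hβ
  have hne : ∀ k : ℕ, ((k : ℤ) + 1, m k) ≠ (0, 0) := fun k hk => by
    have := congrArg Prod.fst hk
    simp only at this
    omega
  have hmaps : MapsTo (fun k : ℕ => α ^ ((k : ℤ) + 1) * β ^ m k) univ
      {x | x ∈ Ioo 1 β ∧ ∃ n m : ℤ, (n, m) ≠ (0, 0) ∧ α ^ n * β ^ m = x} := fun k _ =>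
    ⟨⟨(hm k).1.lt_of_ne' (hind _ _ (hne k)), (hm k).2⟩, _, _, hne k, rfl⟩
  obtain ⟨a, -, b, -, hab, heq⟩ := infinite_univ.exists_ne_map_eq_of_mapsTo hmaps hfin
  refine hind ((a + 1 : ℤ) - (b + 1)) (m a - m b) (fun h => hab ?_) ?_
  · have := congrArg Prod.fst h
    simp only [sub_eq_zero] at this
    omega
  · rw [zpow_sub₀ hα.ne', zpow_sub₀ (zero_lt_one.trans hβ).ne', div_mul_div_comm, heq,
      div_self (zero_lt_one.trans_le (hm b).1).ne']

theorem finite_setOf_mem_roots_of_monic_of_norm_roots_le (d : ℕ) (B : ℝ) :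
    {z : ℂ | ∃ Φ : ℤ[X], Φ.Monic ∧ Φ.natDegree ≤ d ∧
      (∀ w ∈ (Φ.map (Int.castRingHom ℂ)).roots, ‖w‖ ≤ B) ∧
      z ∈ (Φ.map (Int.castRingHom ℂ)).roots}.Finite := by
  classical
  set C : ℤ := ⌈max B 1 ^ d * d.choose (d / 2)⌉
  refine (bUnion_roots_finite (Int.castRingHom ℂ) d (finite_Icc (-C) C)).subset ?_
  rintro z ⟨Φ, hmonic, hdeg, hroots, hz⟩
  have hcoeff : ∀ i, Φ.coeff i ∈ Icc (-C) C := fun i => by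
    have hbound := coeff_bdd_of_roots_le (Int.castRingHom ℂ) hmonic (IsAlgClosed.splits _) hdeg
      hroots i
    rw [coeff_map, eq_intCast, Complex.norm_intCast] at hbound
    rw [mem_Icc, ← abs_le, ← Int.cast_le (R := ℝ), Int.cast_abs]
    exact hbound.trans (Int.le_ceil _)
  simp only [mem_iUnion, Finset.mem_coe, Multiset.mem_toFinset]
  exact ⟨Φ, ⟨hdeg, hcoeff⟩, hz⟩

namespace IsSalemWithNumber

variable {Φ : ℤ[X]} {α : ℝ}

theorem mem_roots (h : IsSalemWithNumber Φ α) : (α : ℂ) ∈ (Φ.map (Int.castRingHom ℂ)).roots := by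
  obtain ⟨-, -, -, _, hroots, -⟩ := h
  rw [hroots]
  exact Multiset.mem_cons_self _ _

theorem norm_le_of_mem_roots (h : IsSalemWithNumber Φ α) {z : ℂ}
    (hz : z ∈ (Φ.map (Int.castRingHom ℂ)).roots) : ‖z‖ ≤ α := by
  obtain ⟨-, -, hα, _, hroots, hs⟩ := h
  rw [hroots, Multiset.mem_cons, Multiset.mem_cons] at hz
  rcases hz with rfl | rfl | hz
  · rw [Complex.norm_real, Real.norm_of_nonneg (zero_lt_one.trans hα).le]
  · rw [← Complex.ofReal_inv, Complex.norm_real,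
      Real.norm_of_nonneg (inv_nonneg.2 (zero_lt_one.trans hα).le)]
    exact (inv_le_one_of_one_le₀ hα.le).trans hα.le
  · rw [hs z hz]
    exact hα.le

end IsSalemWithNumber

theorem multiplicatively_dependent_of_salem_numbers_general
    (α β : ℝ) (hα : 1 < α) (hβ : 1 < β) (d : ℕ)
    (h : ∀ n m : ℤ, (n, m) ≠ (0, 0) → 1 < α ^ n * β ^ m →
      ∃ Φ : Polynomial ℤ, IsSalemWithNumber Φ (α ^ n * β ^ m) ∧ Φ.natDegree ≤ d) :
    ∃ n m : ℤ, (n, m) ≠ (0, 0) ∧ α ^ n * β ^ m = 1 := by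
  refine exists_zpow_mul_zpow_eq_one_of_finite (zero_lt_one.trans hα) hβ ?_
  refine ((finite_setOf_mem_roots_of_monic_of_norm_roots_le d β).preimage
    Complex.ofReal_injective.injOn).subset ?_
  rintro _ ⟨⟨hgt, hlt⟩, n, m, hnm, rfl⟩
  obtain ⟨Φ, hΦ, hdeg⟩ := h n m hnm hgt
  exact ⟨Φ, hΦ.1, hdeg, fun z hz => (hΦ.norm_le_of_mem_roots hz).trans hlt.le, hΦ.mem_roots⟩

/-- If `α, β > 1` are such that every `αⁿβᵐ > 1` (with `(n,m) ≠ (0,0)`) is the Salem number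
of some Salem polynomial of degree at most `d`, then `α` and `β` are multiplicatively
dependent. -/
theorem multiplicatively_dependent_of_salem_numbers
    (α β : ℝ) (hα : 1 < α) (hβ : 1 < β) (d : ℕ) (hd : 0 < d)
    (h : ∀ n m : ℤ, (n, m) ≠ (0, 0) → 1 < α ^ n * β ^ m →
      ∃ Φ : Polynomial ℤ, IsSalemWithNumber Φ (α ^ n * β ^ m) ∧ Φ.natDegree ≤ d) :
    ∃ n m : ℤ, (n, m) ≠ (0, 0) ∧ α ^ n * β ^ m = 1 :=
  multiplicatively_dependent_of_salem_numbers_general α β hα hβ d h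
end

section
/- Let m be a positive integer, let J be the real diagonal matrix of size m + 1 with diagonal entries (1, −1, −1, …, −1), and let g be a real (m+1) × (m+1) matrix satisfying gᵀ J g = J. Then the characteristic polynomial of g has at most one complex root z (counted with multiplicity) with |z| > 1. -/
/-!
Complexify and use the Hermitian form `⟨x, y⟩ = x̄ᵀ J y`, which `g` preserves. Expanding
`⟨g x, g y⟩ = ⟨x, y⟩` and inducting on nilpotency orders shows that generalized eigenvectors for
eigenvalues `λ, μ` with `λ̄ μ ≠ 1` are orthogonal, so the sum `W` of the generalized eigenspaces
for eigenvalues of modulus `> 1` is totally isotropic. A null vector with vanishing first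
coordinate is zero, so `x ↦ x₀` is injective on `W` and `dim W ≤ 1`; but two roots outside the
unit circle, counted with multiplicity, give `dim W ≥ 2`.
-/

open Matrix Module Polynomial
open scoped ComplexOrder

theorem Multiset.exists_pair_le_of_two_le_card {α : Type*} {s : Multiset α}
    (h : 2 ≤ card s) : ∃ a b, {a, b} ≤ s := by
  obtain ⟨a, ha⟩ := card_pos_iff_exists_mem.mp (by omega : 0 < card s)
  obtain ⟨t, rfl⟩ := exists_cons_of_mem ha
  obtain ⟨b, hb⟩ := card_pos_iff_exists_mem.mp (by rw [card_cons] at h; omega : 0 < card t)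
  exact ⟨a, b, cons_le_cons a (singleton_le.mpr hb)⟩

namespace Module.End

variable {K V : Type*} [Field K] [AddCommGroup V] [Module K V] [FiniteDimensional K V]

theorem two_le_finrank_sup_maxGenEigenspace (f : End K V) {a b : K}
    (h : {a, b} ≤ f.charpoly.roots) :
    2 ≤ finrank K ↥(f.maxGenEigenspace a ⊔ f.maxGenEigenspace b) := by
  classical
  have hmult : ∀ c, Multiset.count c {a, b} ≤ finrank K ↥(f.maxGenEigenspace c) := fun c => by
    rw [LinearMap.finrank_maxGenEigenspace_eq, ← count_roots]
    exact Multiset.count_le_of_le c h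
  by_cases hab : a = b
  · subst hab
    rw [sup_idem]
    simpa using hmult a
  · have hbot : f.maxGenEigenspace a ⊓ f.maxGenEigenspace b = ⊥ :=
      (f.disjoint_genEigenspace hab ⊤ ⊤).eq_bot
    have := Submodule.finrank_sup_add_finrank_inf_eq (f.maxGenEigenspace a) (f.maxGenEigenspace b)
    rw [hbot, finrank_bot, add_zero] at this
    have ha := (Multiset.one_le_count_iff_mem.mpr (by simp)).trans (hmult a)
    have hb := (Multiset.one_le_count_iff_mem.mpr (by simp)).trans (hmult b)
    omega

end Module.End

section Sesquilinear

variable {K n : Type*} [Field K] [StarRing K] [Fintype n]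

theorem Matrix.star_mulVec_dotProduct_mulVec_mulVec {A M : Matrix n n K}
    (hA : Aᴴ * M * A = M) (x y : n → K) :
    star (A *ᵥ x) ⬝ᵥ M *ᵥ (A *ᵥ y) = star x ⬝ᵥ M *ᵥ y := by
  rw [star_mulVec, dotProduct_mulVec, vecMul_vecMul, ← dotProduct_mulVec, mulVec_mulVec, hA]

theorem Matrix.star_dotProduct_mulVec_eq_zero_of_pow_sub_smul_apply_eq_zero [DecidableEq n]
    {A M : Matrix n n K} (hA : Aᴴ * M * A = M) {a b : K} (hab : star a * b ≠ 1) :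
    ∀ (j k : ℕ) (x y : n → K), ((toLin' A - a • 1) ^ j) x = 0 →
      ((toLin' A - b • 1) ^ k) y = 0 → star x ⬝ᵥ M *ᵥ y = 0 := by
  intro j
  induction j with
  | zero => intro k x y hx _; simp_all
  | succ j ihj =>
    intro k
    induction k with
    | zero => intro x y _ hy; simp_all
    | succ k ihk =>
      intro x y hx hy
      set N := toLin' A - a • 1
      set N' := toLin' A - b • 1
      have hx' : (N ^ j) (N x) = 0 := by rwa [pow_succ, End.mul_apply] at hx
      have hy' : (N' ^ k) (N' y) = 0 := by rwa [pow_succ, End.mul_apply] at hy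
      have hAx : A *ᵥ x = N x + a • x := by simp [N]
      have hAy : A *ᵥ y = N' y + b • y := by simp [N']
      have h1 := ihj (k + 1) (N x) y hx' hy
      have h2 := ihj k (N x) (N' y) hx' hy'
      have h3 := ihk x (N' y) hx hy'
      -- the three cross terms of `⟨A x, A y⟩` vanish by induction
      have key : star x ⬝ᵥ M *ᵥ y = (star a * b) * (star x ⬝ᵥ M *ᵥ y) := by
        conv_lhs => rw [← star_mulVec_dotProduct_mulVec_mulVec hA x y, hAx, hAy]
        simp only [star_add, star_smul, add_dotProduct, smul_dotProduct, mulVec_add, mulVec_smul,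
          dotProduct_add, dotProduct_smul, h1, h2, h3, smul_eq_mul]
        ring
      by_contra hne
      exact hab ((mul_eq_right₀ hne).mp key.symm)

theorem Matrix.star_dotProduct_mulVec_eq_zero_of_mem_maxGenEigenspace [DecidableEq n]
    {A M : Matrix n n K} (hA : Aᴴ * M * A = M) {a b : K} (hab : star a * b ≠ 1) {x y : n → K}
    (hx : x ∈ End.maxGenEigenspace (toLin' A) a) (hy : y ∈ End.maxGenEigenspace (toLin' A) b) :
    star x ⬝ᵥ M *ᵥ y = 0 := by
  obtain ⟨j, hj⟩ := (End.mem_maxGenEigenspace _ _ _).mp hx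
  obtain ⟨k, hk⟩ := (End.mem_maxGenEigenspace _ _ _).mp hy
  exact star_dotProduct_mulVec_eq_zero_of_pow_sub_smul_apply_eq_zero hA hab j k x y hj hk

theorem Matrix.star_dotProduct_mulVec_eq_zero_of_mem_iSup_maxGenEigenspace [DecidableEq n]
    {ι : Type*} {A M : Matrix n n K} (hA : Aᴴ * M * A = M) {μ : ι → K}
    (hμ : ∀ i j, star (μ i) * μ j ≠ 1) {x y : n → K}
    (hx : x ∈ ⨆ i, End.maxGenEigenspace (toLin' A) (μ i))
    (hy : y ∈ ⨆ i, End.maxGenEigenspace (toLin' A) (μ i)) :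
    star x ⬝ᵥ M *ᵥ y = 0 := by
  refine Submodule.iSup_induction (motive := fun x => star x ⬝ᵥ M *ᵥ y = 0) _ hx
    (fun i x hx => ?_) (by simp) (fun x x' hx hx' => by simp [add_dotProduct, hx, hx'])
  refine Submodule.iSup_induction (motive := fun y => star x ⬝ᵥ M *ᵥ y = 0) _ hy
    (fun j y hy => ?_) (by simp) (fun y y' hy hy' => by simp [mulVec_add, hy, hy'])
  exact star_dotProduct_mulVec_eq_zero_of_mem_maxGenEigenspace hA (hμ i j) hx hy

end Sesquilinear

def lorentzMatrix (m : ℕ) (R : Type*) [Ring R] : Matrix (Fin (m + 1)) (Fin (m + 1)) R :=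
  diagonal fun i => if i = 0 then 1 else -1

theorem lorentzMatrix_map {R S : Type*} [Ring R] [Ring S] (f : R →+* S) (m : ℕ) :
    (lorentzMatrix m R).map f = lorentzMatrix m S := by
  simp only [lorentzMatrix, diagonal_map (map_zero f), apply_ite f, map_one, map_neg]

section Lorentz

variable {K : Type*} [DivisionRing K] [PartialOrder K] [StarRing K] [StarOrderedRing K]

theorem eq_zero_of_star_dotProduct_lorentzMatrix_mulVec_self {m : ℕ} {x : Fin (m + 1) → K}
    (hx : star x ⬝ᵥ lorentzMatrix m K *ᵥ x = 0) (hx₀ : x 0 = 0) : x = 0 := by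
  have hJx : lorentzMatrix m K *ᵥ x = -x := by
    ext i
    by_cases hi : i = 0 <;> simp [lorentzMatrix, mulVec_diagonal, hi, hx₀]
  rwa [hJx, dotProduct_neg, neg_eq_zero, dotProduct_star_self_eq_zero] at hx

theorem finrank_le_one_of_star_dotProduct_lorentzMatrix_mulVec_self {m : ℕ}
    (W : Submodule K (Fin (m + 1) → K)) (hW : ∀ x ∈ W, star x ⬝ᵥ lorentzMatrix m K *ᵥ x = 0) :
    finrank K W ≤ 1 := by
  have hinj : Function.Injective ((LinearMap.proj 0).comp W.subtype) := by
    rw [← LinearMap.ker_eq_bot, LinearMap.ker_eq_bot']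
    intro x hx
    exact Subtype.ext (eq_zero_of_star_dotProduct_lorentzMatrix_mulVec_self (hW x x.2) hx)
  simpa using LinearMap.finrank_le_finrank_of_injective hinj

end Lorentz

theorem Matrix.map_ofReal_conjTranspose_mul_mul {n : Type*} [Fintype n] {g J : Matrix n n ℝ}
    (h : gᵀ * J * g = J) :
    (g.map (algebraMap ℝ ℂ))ᴴ * J.map (algebraMap ℝ ℂ) * g.map (algebraMap ℝ ℂ) =
      J.map (algebraMap ℝ ℂ) := by
  rw [← conjTranspose_map _ fun r => algebraMap_star_comm r,
    conjTranspose_eq_transpose_of_trivial, ← Matrix.map_mul, ← Matrix.map_mul, h]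

theorem star_mul_ne_one_of_one_lt_norm {𝕜 : Type*} [NormedDivisionRing 𝕜] [StarRing 𝕜]
    [NormedStarGroup 𝕜] {z w : 𝕜} (hz : 1 < ‖z‖) (hw : 1 < ‖w‖) : star z * w ≠ 1 := by
  intro h
  have := congrArg norm h
  rw [norm_mul, norm_star, norm_one] at this
  nlinarith

theorem at_most_one_root_outside_unit_circle_general
    (m : ℕ)
    (J : Matrix (Fin (m + 1)) (Fin (m + 1)) ℝ)
    (hJ : J = Matrix.diagonal (fun i => if i = 0 then (1 : ℝ) else -1))
    (g : Matrix (Fin (m + 1)) (Fin (m + 1)) ℝ)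
    (hg : g.transpose * J * g = J) :
    Multiset.card
      (((g.charpoly.map (algebraMap ℝ ℂ)).roots).filter fun z => 1 < ‖z‖) ≤ 1 := by
  set f : End ℂ (Fin (m + 1) → ℂ) := toLin' (g.map (algebraMap ℝ ℂ))
  have hA := map_ofReal_conjTranspose_mul_mul hg
  rw [hJ, ← lorentzMatrix, lorentzMatrix_map] at hA
  rw [← charpoly_map, ← charpoly_toLin']
  by_contra! hcard
  obtain ⟨a, b, hab⟩ := Multiset.exists_pair_le_of_two_le_card hcard
  have ha : 1 < ‖a‖ := (Multiset.mem_filter.mp (Multiset.mem_of_le hab (by simp))).2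
  have hb : 1 < ‖b‖ := (Multiset.mem_filter.mp (Multiset.mem_of_le hab (by simp))).2
  set W := ⨆ z : {z : ℂ // 1 < ‖z‖}, f.maxGenEigenspace z
  have hle : f.maxGenEigenspace a ⊔ f.maxGenEigenspace b ≤ W :=
    sup_le (le_iSup (fun z : {z : ℂ // 1 < ‖z‖} => f.maxGenEigenspace z) ⟨a, ha⟩)
      (le_iSup (fun z : {z : ℂ // 1 < ‖z‖} => f.maxGenEigenspace z) ⟨b, hb⟩)
  have hW : ∀ x ∈ W, star x ⬝ᵥ lorentzMatrix m ℂ *ᵥ x = 0 := fun x hx =>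
    star_dotProduct_mulVec_eq_zero_of_mem_iSup_maxGenEigenspace hA
      (fun z w => star_mul_ne_one_of_one_lt_norm z.2 w.2) hx hx
  have hW_ge := (f.two_le_finrank_sup_maxGenEigenspace (hab.trans (Multiset.filter_le _ _))).trans
    (Submodule.finrank_mono hle)
  have hW_le := finrank_le_one_of_star_dotProduct_lorentzMatrix_mulVec_self W hW
  omega

/-- An element `g` of the real orthogonal group `O(1, m)` has at most one eigenvalue
(counted with multiplicity) outside the unit circle. -/
theorem at_most_one_root_outside_unit_circle
    (m : ℕ) (hm : 0 < m)
    (J : Matrix (Fin (m + 1)) (Fin (m + 1)) ℝ)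
    (hJ : J = Matrix.diagonal (fun i => if i = 0 then (1 : ℝ) else -1))
    (g : Matrix (Fin (m + 1)) (Fin (m + 1)) ℝ)
    (hg : g.transpose * J * g = J) :
    Multiset.card
      (((g.charpoly.map (algebraMap ℝ ℂ)).roots).filter fun z => 1 < ‖z‖) ≤ 1 :=
  at_most_one_root_outside_unit_circle_general m J hJ g hg
end

section
/- Let n ≥ 1 and let F, G be n × n matrices over ℚ with F G = G F. Assume that the characteristic polynomial of F is irreducible in ℚ[t]. Then there exists a polynomial φ(t) ∈ ℚ[t] of degree at most n − 1 such that G = φ(F). -/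
/-!
Let `χ` be the characteristic polynomial of `F` and `v ≠ 0`. If `p(F) v = 0` but `χ ∤ p`, then
`a χ + b p = 1` by irreducibility, and Cayley–Hamilton gives `v = 0`; so `p ↦ p(F) v` is
injective on polynomials of degree `< n`, and by counting dimensions it is onto: `v` is a cyclic
vector. Writing `G v = q(F) v`, commutativity gives `G (r(F) v) = r(F) (G v) = q(F) (r(F) v)`
for every `r`, so `G = q(F)`; reducing `q` modulo `χ` brings its degree below `n`.
-/

open Polynomial

namespace Matrix

variable {ι R K : Type*} [Fintype ι] [DecidableEq ι]

theorem exists_aeval_eq_of_commute_of_forall_aeval_mulVec [CommRing R] {F G : Matrix ι ι R}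
    (hFG : Commute F G) (v : ι → R) (hv : ∀ w, ∃ p : R[X], aeval F p *ᵥ v = w) :
    ∃ p : R[X], aeval F p = G := by
  obtain ⟨q, hq⟩ := hv (G *ᵥ v)
  refine ⟨q, ext_iff_mulVec.2 fun w => ?_⟩
  obtain ⟨r, rfl⟩ := hv w
  have hrG : Commute (aeval F r) G :=
    (Algebra.commute_of_mem_adjoin_singleton_of_commute
      (aeval_mem_adjoin_singleton R F) hFG.symm).symm
  calc aeval F q *ᵥ aeval F r *ᵥ v = aeval F r *ᵥ aeval F q *ᵥ v := by
        rw [mulVec_mulVec, mulVec_mulVec, ← map_mul, ← map_mul, mul_comm]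
    _ = G *ᵥ aeval F r *ᵥ v := by rw [hq, mulVec_mulVec, mulVec_mulVec, hrG.eq]

theorem charpoly_dvd_of_aeval_mulVec_eq_zero [Field K] {F : Matrix ι ι K}
    (hF : Irreducible F.charpoly) {v : ι → K} (hv : v ≠ 0) {p : K[X]}
    (hp : aeval F p *ᵥ v = 0) : F.charpoly ∣ p := by
  by_contra hdvd
  obtain ⟨a, b, hab⟩ := hF.coprime_iff_not_dvd.2 hdvd
  apply hv
  simpa [add_mulVec, ← mulVec_mulVec, aeval_self_charpoly, hp] using
    congrArg (fun r => aeval F r *ᵥ v) hab.symm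

theorem exists_aeval_mulVec_eq_of_irreducible_charpoly [Field K] {F : Matrix ι ι K}
    (hF : Irreducible F.charpoly) {v : ι → K} (hv : v ≠ 0) (w : ι → K) :
    ∃ p : K[X], aeval F p *ᵥ v = w := by
  let L : degreeLT K (Fintype.card ι) →ₗ[K] ι → K :=
    LinearMap.applyₗ v ∘ₗ toLin'.toLinearMap ∘ₗ (aeval F).toLinearMap ∘ₗ
      (degreeLT K (Fintype.card ι)).subtype
  have hinj : Function.Injective L := by
    refine (injective_iff_map_eq_zero L).2 fun p hp => Subtype.ext ?_
    refine eq_zero_of_dvd_of_degree_lt (charpoly_dvd_of_aeval_mulVec_eq_zero hF hv hp) ?_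
    rw [charpoly_degree_eq_dim]
    exact mem_degreeLT.1 p.2
  have hfinrank :
      Module.finrank K (degreeLT K (Fintype.card ι)) = Module.finrank K (ι → K) := by
    rw [(degreeLTEquiv K _).finrank_eq, Module.finrank_fin_fun, Module.finrank_fintype_fun_eq_card]
  obtain ⟨p, hp⟩ := (LinearMap.injective_iff_surjective_of_finrank_eq_finrank hfinrank).1 hinj w
  exact ⟨p, hp⟩

end Matrix

/-- If `F` and `G` are commuting `n × n` rational matrices and the characteristic
polynomial of `F` is irreducible over `ℚ`, then `G` is a polynomial in `F` of degree
at most `n - 1`. -/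
theorem commuting_matrix_is_polynomial_in_matrix
    (n : ℕ) (hn : 1 ≤ n)
    (F G : Matrix (Fin n) (Fin n) ℚ)
    (hcomm : F * G = G * F)
    (hirr : Irreducible F.charpoly) :
    ∃ φ : Polynomial ℚ, φ.natDegree ≤ n - 1 ∧ Polynomial.aeval F φ = G := by
  have : Nonempty (Fin n) := ⟨⟨0, hn⟩⟩
  obtain ⟨v, hv⟩ := exists_ne (0 : Fin n → ℚ)
  obtain ⟨p, hp⟩ := Matrix.exists_aeval_eq_of_commute_of_forall_aeval_mulVec hcomm v
    (Matrix.exists_aeval_mulVec_eq_of_irreducible_charpoly hirr hv)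
  refine ⟨p %ₘ F.charpoly, ?_, ?_⟩
  · have := natDegree_modByMonic_lt p F.charpoly_monic hirr.ne_one
    rw [Matrix.charpoly_natDegree_eq_dim, Fintype.card_fin] at this
    omega
  · rw [aeval_modByMonic_eq_self_of_root (Matrix.aeval_self_charpoly F), hp]
end

section
/- Let V be a finite-dimensional vector space over ℚ, let F : V → V be a ℚ-linear endomorphism, and let σ ∈ V ⊗_ℚ ℂ be a nonzero vector with (F ⊗ 1)(σ) = λ σ for some λ ∈ ℂ. Assume that no proper ℚ-subspace W ⊊ V satisfies both F(W) ⊆ W and σ ∈ W ⊗_ℚ ℂ. Then the characteristic polynomial of F is primary in ℚ[t], i.e. it equals f(t)^m for some monic irreducible polynomial f(t) ∈ ℚ[t] and some integer m ≥ 1. -/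
/-!
The eigenvalue `λ` is a root of the characteristic polynomial of `F`, hence algebraic over `ℚ`;
let `f` be its minimal polynomial. Since `f(F ⊗ 1) σ = f(λ) σ = 0` and `ℂ` is flat over `ℚ`,
`σ` lies in `ker f(F) ⊗ ℂ`, and minimality forces `f(F) = 0`. Every irreducible factor `q` of the
characteristic polynomial then divides `f`: over `ℚ[t]/(q)` the class of `t` is an eigenvalue of
`F`, hence a root of `f`. So the characteristic polynomial is a power of `f`.
-/

open TensorProduct Polynomial Module.End

section BaseChange

variable {R A M : Type*} [CommRing R] [AddCommGroup M] [Module R M]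

lemma LinearMap.ker_baseChange [CommRing A] [Algebra R A] [Module.Flat R A]
    {N : Type*} [AddCommGroup N] [Module R N] (f : M →ₗ[R] N) :
    LinearMap.ker (f.baseChange A) = (LinearMap.ker f).baseChange A :=
  Module.Flat.ker_lTensor_eq A A f

lemma Module.End.baseChange_aeval [CommRing A] [Algebra R A] (F : Module.End R M) (p : R[X]) :
    (aeval F p).baseChange A = aeval (F.baseChange A) p :=
  (aeval_algHom_apply (Module.End.baseChangeHom R A M) F p).symm

lemma Module.End.apply_mem_ker_aeval (F : Module.End R M) (p : R[X]) {x : M}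
    (hx : x ∈ LinearMap.ker (aeval F p)) : F x ∈ LinearMap.ker (aeval F p) := by
  have hcomm : Commute F (aeval F p) := by simpa using (Commute.all X p).map (aeval F)
  rw [LinearMap.mem_ker] at hx ⊢
  rw [← Module.End.mul_apply, ← hcomm.eq, Module.End.mul_apply, hx, map_zero]

lemma Module.End.HasEigenvector.baseChange_aeval_apply [CommRing A] [Algebra R A]
    {F : Module.End R M} {μ : A} {v : A ⊗[R] M}
    (hv : HasEigenvector (F.baseChange A) μ v) (p : R[X]) :
    (aeval F p).baseChange A v = aeval μ p • v := by
  rw [baseChange_aeval, ← aeval_map_algebraMap A, aeval_apply_of_hasEigenvector hv,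
    eval_map_algebraMap]

variable [Field A] [Algebra R A] {F : Module.End R M} {μ : A} {v : A ⊗[R] M}

lemma Module.End.HasEigenvector.aeval_eq_zero
    (hv : HasEigenvector (F.baseChange A) μ v) {p : R[X]} (hp : aeval F p = 0) :
    aeval μ p = 0 := by
  have h := hv.baseChange_aeval_apply p
  rw [hp, LinearMap.baseChange_zero, LinearMap.zero_apply, eq_comm, smul_eq_zero] at h
  exact h.resolve_right hv.2

lemma Module.End.HasEigenvector.isIntegral [Module.Free R M] [Module.Finite R M]
    (hv : HasEigenvector (F.baseChange A) μ v) : IsIntegral R μ :=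
  ⟨LinearMap.charpoly F, LinearMap.charpoly_monic F,
    hv.aeval_eq_zero (LinearMap.aeval_self_charpoly F)⟩

end BaseChange

section Charpoly

variable {K V : Type*} [Field K] [AddCommGroup V] [Module K V] [FiniteDimensional K V]
  {F : Module.End K V}

lemma LinearMap.dvd_of_irreducible_dvd_charpoly {p q : K[X]} (hq : Irreducible q)
    (hqF : q ∣ F.charpoly) (hp : aeval F p = 0) : q ∣ p := by
  have := Fact.mk hq
  have hroot : (F.baseChange (AdjoinRoot q)).charpoly.IsRoot (AdjoinRoot.root q) := by
    rw [LinearMap.charpoly_baseChange, IsRoot, eval_map_algebraMap, AdjoinRoot.aeval_eq,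
      AdjoinRoot.mk_eq_zero]
    exact hqF
  obtain ⟨v, hv⟩ := (hasEigenvalue_iff_isRoot_charpoly _ _ |>.mpr hroot).exists_hasEigenvector
  rw [← AdjoinRoot.mk_eq_zero, ← AdjoinRoot.aeval_eq]
  exact hv.aeval_eq_zero hp

lemma LinearMap.exists_charpoly_eq_pow_of_aeval_eq_zero {f : K[X]} (hirr : Irreducible f)
    (hmonic : f.Monic) (hf : aeval F f = 0) : ∃ m : ℕ, F.charpoly = f ^ m := by
  classical
  have hfactor {q : K[X]} (hq : q ∈ UniqueFactorizationMonoid.normalizedFactors F.charpoly) :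
      q = f := by
    obtain ⟨hqirr, hqmonic, hqF⟩ :=
      (Polynomial.mem_normalizedFactors_iff F.charpoly_monic.ne_zero).mp hq
    exact eq_of_monic_of_associated hqmonic hmonic
      (hqirr.associated_of_dvd hirr (dvd_of_irreducible_dvd_charpoly hqirr hqF hf))
  obtain ⟨m, hm⟩ :=
    UniqueFactorizationMonoid.exists_associated_prime_pow_of_unique_normalized_factor
      hfactor F.charpoly_monic.ne_zero
  exact ⟨m, eq_of_monic_of_associated F.charpoly_monic (hmonic.pow m) hm.symm⟩

end Charpoly

/-- Let `F` be an endomorphism of a finite-dimensional `ℚ`-vector space `V`, and let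
`σ ≠ 0` be an eigenvector of the complexification of `F`. If no proper `ℚ`-subspace
`W ⊊ V` is `F`-stable with `σ ∈ W ⊗ ℂ`, then the characteristic polynomial of `F`
is a power of a monic irreducible polynomial. -/
theorem charpoly_primary_of_minimality
    (V : Type*) [AddCommGroup V] [Module ℚ V] [FiniteDimensional ℚ V]
    (F : V →ₗ[ℚ] V) (σ : ℂ ⊗[ℚ] V) (hσ : σ ≠ 0)
    (lam : ℂ) (heig : F.baseChange ℂ σ = lam • σ)
    (hmin : ∀ W : Submodule ℚ V, (∀ x ∈ W, F x ∈ W) → σ ∈ W.baseChange ℂ → W = ⊤) :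
    ∃ f : Polynomial ℚ, f.Monic ∧ Irreducible f ∧ ∃ m : ℕ, 1 ≤ m ∧ F.charpoly = f ^ m := by
  have hv : HasEigenvector (F.baseChange ℂ) lam σ := ⟨mem_eigenspace_iff.mpr heig, hσ⟩
  have hint : IsIntegral ℚ lam := hv.isIntegral
  have hf : aeval F (minpoly ℚ lam) = 0 := by
    refine LinearMap.ker_eq_top.mp (hmin _ (fun _ => apply_mem_ker_aeval F _) ?_)
    rw [← LinearMap.ker_baseChange, LinearMap.mem_ker, hv.baseChange_aeval_apply,
      minpoly.aeval, zero_smul]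
  obtain ⟨m, hm⟩ := LinearMap.exists_charpoly_eq_pow_of_aeval_eq_zero
    (minpoly.irreducible hint) (minpoly.monic hint) hf
  have : Nontrivial V := not_subsingleton_iff_nontrivial.mp fun _ => hσ (Subsingleton.elim σ 0)
  refine ⟨_, minpoly.monic hint, minpoly.irreducible hint, m, Nat.one_le_iff_ne_zero.mpr ?_, hm⟩
  rintro rfl
  have hdeg := F.charpoly_natDegree
  rw [hm, pow_zero, natDegree_one] at hdeg
  exact Module.finrank_pos.ne hdeg
end

section
/- Let V be a finite-dimensional vector space over ℚ, let F : V → V be a ℚ-linear endomorphism, and let σ ∈ V ⊗_ℚ ℂ be a nonzero vector with (F ⊗ 1)(σ) = σ. Assume that no proper ℚ-subspace W ⊊ V satisfies both F(W) ⊆ W and σ ∈ W ⊗_ℚ ℂ. Then F is the identity map of V. -/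
open TensorProduct

/-- Let `F` be an endomorphism of a finite-dimensional `ℚ`-vector space `V`, and let
`σ ≠ 0` be a vector of `V ⊗ ℂ` fixed by the complexification of `F`. If no proper
`ℚ`-subspace `W ⊊ V` is `F`-stable with `σ ∈ W ⊗ ℂ`, then `F` is the identity. -/
theorem eq_id_of_fixes_sigma
    (V : Type*) [AddCommGroup V] [Module ℚ V] [FiniteDimensional ℚ V]
    (F : V →ₗ[ℚ] V) (σ : ℂ ⊗[ℚ] V) (hσ : σ ≠ 0)
    (heig : F.baseChange ℂ σ = σ)
    (hmin : ∀ W : Submodule ℚ V, (∀ x ∈ W, F x ∈ W) → σ ∈ W.baseChange ℂ → W = ⊤) :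
    F = LinearMap.id := by
  set g : V →ₗ[ℚ] V := F - LinearMap.id with hg
  have hexact : Function.Exact ((LinearMap.ker g).subtype) g :=
    g.exact_subtype_ker_map
  have hexactC := Module.Flat.lTensor_exact (R := ℚ) ℂ hexact
  have hσ0 : LinearMap.lTensor ℂ g σ = 0 := by
    have h1 : LinearMap.lTensor ℂ g σ = g.baseChange ℂ σ := rfl
    rw [h1, hg, LinearMap.baseChange_sub]
    simp [heig]
  obtain ⟨τ, hτ⟩ := (hexactC σ).mp hσ0
  have key : ∀ τ : ℂ ⊗[ℚ] (LinearMap.ker g),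
      LinearMap.lTensor ℂ (LinearMap.ker g).subtype τ ∈ (LinearMap.ker g).baseChange ℂ := by
    intro τ
    induction τ using TensorProduct.induction_on with
    | zero => simp
    | tmul c x =>
        rw [LinearMap.lTensor_tmul]
        exact Submodule.tmul_mem_baseChange_of_mem c x.2
    | add a b ha hb =>
        rw [map_add]; exact Submodule.add_mem _ ha hb
  have hmem : σ ∈ (LinearMap.ker g).baseChange ℂ := hτ ▸ key τ
  have hstable : ∀ x ∈ LinearMap.ker g, F x ∈ LinearMap.ker g := by
    intro x hx
    have hx' : F x = x := by
      have := hx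
      simp only [hg, LinearMap.mem_ker, LinearMap.sub_apply, LinearMap.id_apply,
        sub_eq_zero] at this
      exact this
    rw [hx']; exact hx
  have htop := hmin _ hstable hmem
  ext x
  have hx : x ∈ LinearMap.ker g := htop ▸ Submodule.mem_top
  simpa [hg, sub_eq_zero] using hx
end

section
/- Let 1 → H → G → Q → 1 be an exact sequence of groups in which Q is finite (equivalently, H is a normal subgroup of finite index in G). Then H is almost abelian of rank r if and only if G is almost abelian of rank r. -/
open Subgroup Module

noncomputable section AuxAlmostAbelian

/-- A finite-index subgroup of `ℤ^r` (written multiplicatively) is isomorphic to `ℤ^r`. -/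
lemma aux_equiv {r : ℕ} (T : Subgroup (Multiplicative (Fin r → ℤ))) (hT : T.FiniteIndex) :
    Nonempty (T ≃* Multiplicative (Fin r → ℤ)) := by
  classical
  set V := (Fin r → ℤ)
  let N : Submodule ℤ V :=
    { carrier := {v : V | Multiplicative.ofAdd v ∈ T}
      add_mem' := fun ha hb => T.mul_mem ha hb
      zero_mem' := T.one_mem
      smul_mem' := fun c v hv => by
        show Multiplicative.ofAdd (c • v) ∈ T
        rw [ofAdd_zsmul]
        exact T.zpow_mem hv c }
  have hn0 : T.index ≠ 0 := hT.index_ne_zero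
  have hmem : ∀ v : V, (T.index : ℤ) • v ∈ N := by
    intro v
    have : (Multiplicative.ofAdd v) ^ T.index ∈ T := T.pow_index_mem _
    show Multiplicative.ofAdd ((T.index : ℤ) • v) ∈ T
    rw [ofAdd_zsmul]
    simpa using this
  let φ : V →ₗ[ℤ] V := (T.index : ℤ) • LinearMap.id
  have hφ : Function.Injective φ := by
    intro x y hxy
    have : (T.index : ℤ) • x = (T.index : ℤ) • y := hxy
    exact smul_right_injective V (by exact_mod_cast hn0) this
  have hrange : LinearMap.range φ ≤ N := by
    rintro w ⟨v, rfl⟩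
    exact hmem v
  have hfin : Module.Finite ℤ N := inferInstance
  have hfree : Module.Free ℤ N := inferInstance
  have h1 : finrank ℤ N ≤ r := by
    have := Submodule.finrank_le N
    rwa [Module.finrank_fin_fun] at this
  have h2 : r ≤ finrank ℤ N := by
    have hle : finrank ℤ (LinearMap.range φ) ≤ finrank ℤ N :=
      Submodule.finrank_mono hrange
    have heq : finrank ℤ (LinearMap.range φ) = r := by
      rw [← (LinearEquiv.ofInjective φ hφ).finrank_eq, Module.finrank_fin_fun]
    omega
  have hcard : Fintype.card (Module.Free.ChooseBasisIndex ℤ N) = r := by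
    rw [← Module.finrank_eq_card_chooseBasisIndex]; omega
  let b := Module.Free.chooseBasis ℤ N
  let e : N ≃ₗ[ℤ] V := b.equiv (Pi.basisFun ℤ (Fin r)) (Fintype.equivFinOfCardEq hcard)
  have e1 : T ≃* Multiplicative N :=
    { toFun := fun x => Multiplicative.ofAdd (⟨x.1.toAdd, x.2⟩ : N)
      invFun := fun x => ⟨Multiplicative.ofAdd x.toAdd.1, x.toAdd.2⟩
      left_inv := fun x => rfl
      right_inv := fun x => rfl
      map_mul' := fun x y => rfl }
  exact ⟨e1.trans (AddEquiv.toMultiplicative e.toAddEquiv)⟩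

/-- Having a surjection onto `ℤ^r` with finite kernel transfers along group isomorphisms. -/
lemma aux_transfer {A B : Type*} [Group A] [Group B] (e : A ≃* B) {r : ℕ}
    (h : ∃ f : A →* Multiplicative (Fin r → ℤ), Function.Surjective f ∧ Finite f.ker) :
    ∃ g : B →* Multiplicative (Fin r → ℤ), Function.Surjective g ∧ Finite g.ker := by
  obtain ⟨f, hf, hker⟩ := h
  refine ⟨f.comp e.symm.toMonoidHom, hf.comp e.symm.surjective, ?_⟩
  have : Function.Injective
      (fun x : (f.comp e.symm.toMonoidHom).ker => (⟨e.symm x.1, x.2⟩ : f.ker)) := by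
    intro x y hxy
    exact Subtype.ext (e.symm.injective (congrArg Subtype.val hxy))
  exact Finite.of_injective _ this

/-- If `A` surjects onto `ℤ^r` with finite kernel, so does any finite-index subgroup of `A`. -/
lemma aux_restrict {A : Type*} [Group A] {r : ℕ}
    (f : A →* Multiplicative (Fin r → ℤ)) (hf : Function.Surjective f) (hker : Finite f.ker)
    (B : Subgroup A) (hB : B.FiniteIndex) :
    ∃ g : B →* Multiplicative (Fin r → ℤ), Function.Surjective g ∧ Finite g.ker := by
  classical
  let f' := f.comp B.subtype
  have hrange : f'.range = B.map f := by
    rw [MonoidHom.range_comp, B.range_subtype]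
  have hidx : f'.range.FiniteIndex := by
    rw [hrange]
    refine ⟨fun h0 => hB.index_ne_zero ?_⟩
    have := B.index_map_dvd hf
    exact Nat.eq_zero_of_zero_dvd (h0 ▸ this)
  obtain ⟨e⟩ := aux_equiv f'.range hidx
  refine ⟨e.toMonoidHom.comp f'.rangeRestrict, e.surjective.comp f'.rangeRestrict_surjective, ?_⟩
  have : Function.Injective (fun x : (e.toMonoidHom.comp f'.rangeRestrict).ker =>
      (⟨B.subtype x.1, by
        have hx : e (f'.rangeRestrict x.1) = 1 := x.2
        have hx2 : f'.rangeRestrict x.1 = 1 := by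
          have := e.injective (by simpa using hx)
          simpa using this
        have : f' x.1 = 1 := by
          have := congrArg Subtype.val hx2
          simpa using this
        exact this⟩ : f.ker)) := by
    intro x y hxy
    have h2 := Subtype.ext_iff.mp hxy
    exact Subtype.ext (B.subtype_injective h2)
  exact Finite.of_injective _ this

end AuxAlmostAbelian

/-- A group `G` is almost abelian of rank `r` if there is a normal subgroup `G⁰` of
finite index and an exact sequence `1 → K → G⁰ → ℤ^r → 0` with `K` finite. -/
def IsAlmostAbelianOfRank (G : Type*) [Group G] (r : ℕ) : Prop :=
  ∃ G0 : Subgroup G, G0.Normal ∧ G0.FiniteIndex ∧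
    ∃ f : G0 →* Multiplicative (Fin r → ℤ), Function.Surjective f ∧ Finite f.ker

/-- If `H` is a normal subgroup of finite index in `G` (i.e. there is an exact sequence
`1 → H → G → Q → 1` with `Q` finite), then `H` is almost abelian of rank `r` iff `G` is. -/
theorem almost_abelian_iff_of_finite_index
    (G : Type*) [Group G] (H : Subgroup G) [H.Normal] (hH : H.FiniteIndex) (r : ℕ) :
    IsAlmostAbelianOfRank H r ↔ IsAlmostAbelianOfRank G r := by
  haveI := hH
  constructor
  · rintro ⟨H0, hnorm, hfi, f, hf, hker⟩
    let K : Subgroup G := H0.map H.subtype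
    haveI hKfi : K.FiniteIndex := by
      constructor
      rw [Subgroup.index_map_subtype]
      exact Nat.mul_ne_zero hfi.index_ne_zero hH.index_ne_zero
    let N := K.normalCore
    haveI hNfi : N.FiniteIndex := inferInstance
    have hPK : ∃ g : K →* Multiplicative (Fin r → ℤ), Function.Surjective g ∧ Finite g.ker :=
      aux_transfer (Subgroup.equivMapOfInjective H0 H.subtype H.subtype_injective) ⟨f, hf, hker⟩
    obtain ⟨g, hg, hgker⟩ := hPK
    have hPN' := aux_restrict g hg hgker (N.subgroupOf K) inferInstance
    have hPN := aux_transfer (Subgroup.subgroupOfEquivOfLe K.normalCore_le) hPN'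
    exact ⟨N, K.normalCore_normal, hNfi, hPN⟩
  · rintro ⟨G0, hnorm, hfi, f, hf, hker⟩
    haveI := hfi
    haveI := hnorm
    let M : Subgroup G := H ⊓ G0
    haveI hMfi : M.FiniteIndex := inferInstance
    haveI hMnorm : M.Normal := inferInstance
    have hP1 := aux_restrict f hf hker (M.subgroupOf G0) inferInstance
    have hP2 := aux_transfer (Subgroup.subgroupOfEquivOfLe (inf_le_right : M ≤ G0)) hP1
    have hP3 := aux_transfer (Subgroup.subgroupOfEquivOfLe (inf_le_left : M ≤ H)).symm hP2
    exact ⟨M.subgroupOf H, inferInstance, inferInstance, hP3⟩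
end

section
/- Let 1 → K → G → H → 1 be an exact sequence of groups in which K is finite (equivalently, there is a surjective homomorphism G → H with finite kernel K). Then H is almost abelian of rank r if and only if G is almost abelian of rank r. -/
section

open Function Subgroup

variable {G H M : Type*} [Group G] [Group H] [Group M]

instance Subgroup.finite_subgroupOf (K L : Subgroup G) [Finite K] : Finite (K.subgroupOf L) :=
  Finite.of_injective (fun x ↦ (⟨x, x.2⟩ : K)) fun _ _ h ↦
    Subtype.ext <| Subtype.ext (congrArg Subtype.val h :)

namespace MonoidHom

theorem finite_of_finite_ker_of_finite_range (f : G →* H) [Finite f.ker] [Finite f.range] :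
    Finite G :=
  have : Finite (G ⧸ f.ker) := .of_equiv _ (QuotientGroup.quotientKerEquivRange f).symm.toEquiv
  .of_subgroup_quotient f.ker

theorem ker_subgroupComap (f : G →* H) (K : Subgroup H) :
    (f.subgroupComap K).ker = f.ker.subgroupOf (K.comap f) :=
  Subgroup.ext fun _ ↦ Subtype.ext_iff

instance finite_ker_subgroupComap (f : G →* H) [Finite f.ker] (K : Subgroup H) :
    Finite (f.subgroupComap K).ker := by
  rw [ker_subgroupComap]; infer_instance

instance finite_ker_subgroupMap (f : G →* H) [Finite f.ker] (K : Subgroup G) :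
    Finite (f.subgroupMap K).ker := by
  rw [ker_subgroupMap]; infer_instance

instance finite_ker_comp (f : G →* H) (g : H →* M) [Finite f.ker] [Finite g.ker] :
    Finite (g.comp f).ker := by
  rw [← comap_ker]
  exact (f.subgroupComap g.ker).finite_of_finite_ker_of_finite_range

theorem ker_le_of_isMulTorsionFree [IsMulTorsionFree M] (f : G →* H) [Finite f.ker]
    (φ : G →* M) : f.ker ≤ φ.ker := fun x hx ↦
  (isOfFinOrder_iff_eq_one _).1 <|
    φ.isOfFinOrder <| f.ker.subtype.isOfFinOrder <| isOfFinOrder_of_finite (⟨x, hx⟩ : f.ker)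

theorem exists_comp_eq_of_isMulTorsionFree [IsMulTorsionFree M] (f : G →* H)
    (hf : Surjective f) [Finite f.ker] (φ : G →* M) : ∃ ψ : H →* M, ψ.comp f = φ :=
  ⟨f.liftOfRightInverse _ (rightInverse_surjInv hf) ⟨φ, f.ker_le_of_isMulTorsionFree φ⟩,
    f.liftOfRightInverse_comp _ _ _⟩

theorem exists_surjective_finite_ker_iff [IsMulTorsionFree M] (f : G →* H)
    (hf : Surjective f) [Finite f.ker] :
    (∃ φ : G →* M, Surjective φ ∧ Finite φ.ker) ↔ ∃ ψ : H →* M, Surjective ψ ∧ Finite ψ.ker := by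
  constructor
  · rintro ⟨φ, hφ, hφker⟩
    obtain ⟨ψ, rfl⟩ := f.exists_comp_eq_of_isMulTorsionFree hf φ
    refine ⟨ψ, .of_comp hφ, ?_⟩
    rw [← map_comap_eq_self_of_surjective hf ψ.ker, comap_ker]
    exact .of_surjective _ (f.subgroupMap_surjective (ψ.comp f).ker)
  · rintro ⟨ψ, hψ, hψker⟩
    exact ⟨ψ.comp f, hψ.comp hf, inferInstance⟩

end MonoidHom

namespace IsAlmostAbelianOfRank

variable {r : ℕ} {f : G →* H}

theorem comap (hH : IsAlmostAbelianOfRank H r) (hf : Surjective f) [Finite f.ker] :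
    IsAlmostAbelianOfRank G r := by
  obtain ⟨H0, hnormal, hindex, hab⟩ := hH
  refine ⟨H0.comap f, hnormal.comap f, ⟨?_⟩, ?_⟩
  · rw [index_comap_of_surjective H0 hf]
    exact hindex.index_ne_zero
  · exact ((f.subgroupComap H0).exists_surjective_finite_ker_iff
      (f.subgroupComap_surjective_of_surjective H0 hf)).2 hab

theorem map (hG : IsAlmostAbelianOfRank G r) (hf : Surjective f) [Finite f.ker] :
    IsAlmostAbelianOfRank H r := by
  obtain ⟨G0, hnormal, hindex, hab⟩ := hG
  refine ⟨G0.map f, hnormal.map f hf, ⟨?_⟩, ?_⟩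
  · exact ne_zero_of_dvd_ne_zero hindex.index_ne_zero (index_map_dvd G0 hf)
  · exact ((f.subgroupMap G0).exists_surjective_finite_ker_iff (f.subgroupMap_surjective G0)).1 hab

end IsAlmostAbelianOfRank

end

/-- If `G → H` is a surjective group homomorphism with finite kernel `K` (i.e. there is an
exact sequence `1 → K → G → H → 1` with `K` finite), then `H` is almost abelian of rank
`r` iff `G` is. -/
theorem almost_abelian_iff_of_finite_kernel
    {G H : Type*} [Group G] [Group H] (f : G →* H) (hf : Function.Surjective f)
    (hker : Finite f.ker) (r : ℕ) :
    IsAlmostAbelianOfRank H r ↔ IsAlmostAbelianOfRank G r :=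
  ⟨fun hH ↦ hH.comap hf, fun hG ↦ hG.map hf⟩
end

section
/- Let Λ be a free ℤ-module of finite rank and let e₀, u₁, u₂ be elements that form part of a ℤ-basis of Λ. Let z ∈ ℂ with z ∉ ℝ, and set σ = √2 · e₀ + z · u₁ + u₂ ∈ Λ ⊗ ℂ. Then the minimal primitive submodule M of Λ with σ ∈ M ⊗ ℂ equals ℤe₀ ⊕ ℤu₁ ⊕ ℤu₂. -/
/-!
The span of part of a basis is saturated, and `σ` lies in its complexification, so the minimal
primitive submodule is contained in `ℤe₀ ⊕ ℤu₁ ⊕ ℤu₂`. Conversely, if `Λ ⧸ M` is torsion-free it is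
flat over `ℤ`, and `σ ∈ M ⊗ ℂ` says that `√2 ⊗ ē₀ + z ⊗ ū₁ + 1 ⊗ ū₂ = 0` in `ℂ ⊗ (Λ ⧸ M)`. Since
`√2, z, 1` are linearly independent over `ℤ` (irrationality of `√2` and `z ∉ ℝ`), flatness forces
`ē₀ = ū₁ = ū₂ = 0`, i.e. `e₀, u₁, u₂ ∈ M`.
-/

open TensorProduct

theorem isAddTorsionFree_iff_noZeroSMulDivisors_int {G : Type*} [AddCommGroup G] :
    IsAddTorsionFree G ↔ NoZeroSMulDivisors ℤ G :=
  ⟨fun _ => inferInstance, fun _ => .of_isTorsionFree ℤ G⟩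

/-- Unlike `Module.isTorsionFree_int_iff_isAddTorsionFree`, the `ℤ`-module structure is arbitrary:
on `Λ ⧸ M` instance search finds `AddCommGroup.toIntModule`, not `Submodule.Quotient.module`. -/
theorem Module.isTorsionFree_int_iff_isAddTorsionFree' {G : Type*} [AddCommGroup G]
    [inst : Module ℤ G] : Module.IsTorsionFree ℤ G ↔ IsAddTorsionFree G := by
  rw [Subsingleton.elim inst (AddCommGroup.toIntModule G)]
  exact Module.isTorsionFree_int_iff_isAddTorsionFree

theorem Module.Basis.isTorsionFree_quotient_span_image {ι R M : Type*} [CommRing R] [IsDomain R]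
    [AddCommGroup M] [Module R M] (b : Basis ι R M) (s : Set ι) :
    Module.IsTorsionFree R (M ⧸ Submodule.span R (b '' s)) := by
  refine .of_smul_eq_zero fun c x hx => or_iff_not_imp_left.2 fun hc => ?_
  obtain ⟨y, rfl⟩ := Submodule.Quotient.mk_surjective _ x
  rw [← Submodule.Quotient.mk_smul, Submodule.Quotient.mk_eq_zero, b.mem_span_image] at hx
  rwa [Submodule.Quotient.mk_eq_zero, b.mem_span_image, ← Finsupp.support_smul_eq hc, ← map_smul]

theorem Module.Flat.eq_zero_of_sum_tmul_eq_zero {R A V κ : Type*} [CommSemiring R]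
    [AddCommMonoid A] [Module R A] [AddCommMonoid V] [Module R V] [Module.Flat R V] [Fintype κ]
    {a : κ → A} (ha : LinearIndependent R a) {v : κ → V} (h : ∑ k, a k ⊗ₜ[R] v k = 0) :
    v = 0 := by
  classical
  set x : (κ →₀ R) ⊗[R] V := ∑ k, Finsupp.single k 1 ⊗ₜ v k
  have hx : x = 0 := by
    refine rTensor_preserves_injective_linearMap _ ha.finsuppLinearCombination_injective ?_
    simpa [x, map_sum] using h
  have hv : ∑ k, Finsupp.single k (v k) = 0 := by
    simpa [x, map_sum, finsuppScalarLeft_apply_tmul] using congrArg (finsuppScalarLeft R V κ) hx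
  ext k
  simpa [Finsupp.finsetSum_apply, Finsupp.single_apply] using congrArg (· k) hv

theorem Submodule.mem_of_sum_tmul_mem_baseChange {R A M κ : Type*} [CommRing R] [CommRing A]
    [Algebra R A] [AddCommGroup M] [Module R M] [Fintype κ] (p : Submodule R M)
    [Module.Flat R (M ⧸ p)] {a : κ → A} (ha : LinearIndependent R a) {v : κ → M}
    (h : ∑ k, a k ⊗ₜ[R] v k ∈ p.baseChange A) (k : κ) : v k ∈ p := by
  obtain ⟨y, hy⟩ := h
  have hzero : ∑ k, a k ⊗ₜ[R] p.mkQ (v k) = 0 := by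
    have := congrArg (p.mkQ.baseChange A) hy
    rw [← LinearMap.comp_apply, ← LinearMap.baseChange_comp,
      (LinearMap.exact_subtype_mkQ p).linearMap_comp_eq_zero] at this
    simpa [map_sum] using this.symm
  simpa using congrFun (Module.Flat.eq_zero_of_sum_tmul_eq_zero ha hzero) k

theorem linearIndependent_sqrt_two_complex {z : ℂ} (hz : z.im ≠ 0) :
    LinearIndependent ℤ ![(Real.sqrt 2 : ℂ), z, 1] := by
  rw [Fintype.linearIndependent_iff]
  intro g hg
  simp only [Fin.sum_univ_three, Matrix.cons_val, zsmul_eq_mul] at hg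
  have h1 : g 1 = 0 := by simpa [hz] using congrArg Complex.im hg
  have hre : (g 0 : ℝ) * √2 + g 2 = 0 := by simpa [h1] using congrArg Complex.re hg
  have h0 : g 0 = 0 := by
    by_contra h0
    refine irrational_sqrt_two ⟨-g 2 / g 0, ?_⟩
    push_cast
    field_simp
    linarith
  have h2 : g 2 = 0 := by simpa [h0] using hre
  intro i
  fin_cases i <;> assumption

theorem minimal_primitive_submodule_eq_span_general
    (Λ : Type*) [AddCommGroup Λ] [Module ℤ Λ]
    {ι : Type*} (b : Module.Basis ι ℤ Λ)
    (i0 i1 i2 : ι)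
    (z : ℂ) (hz : z.im ≠ 0) :
    sInf {M : Submodule ℤ Λ | NoZeroSMulDivisors ℤ (Λ ⧸ M) ∧
        ((Real.sqrt 2 : ℂ) ⊗ₜ[ℤ] b i0 + z ⊗ₜ[ℤ] b i1 + (1 : ℂ) ⊗ₜ[ℤ] b i2)
          ∈ M.baseChange ℂ} =
      Submodule.span ℤ ({b i0, b i1, b i2} : Set Λ) := by
  have himage : b '' {i0, i1, i2} = {b i0, b i1, b i2} := by simp [Set.image_insert_eq]
  refine le_antisymm (sInf_le ⟨?_, ?_⟩) (le_sInf ?_)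
  · rw [← himage, ← isAddTorsionFree_iff_noZeroSMulDivisors_int,
      ← Module.isTorsionFree_int_iff_isAddTorsionFree' (inst := Submodule.Quotient.module _)]
    exact b.isTorsionFree_quotient_span_image {i0, i1, i2}
  · refine add_mem (add_mem ?_ ?_) ?_ <;>
      exact Submodule.tmul_mem_baseChange_of_mem _ (Submodule.subset_span (by simp))
  · rintro M ⟨hM, hσ⟩
    have hMfree := (Module.isTorsionFree_int_iff_isAddTorsionFree'
      (inst := Submodule.Quotient.module M)).2 (isAddTorsionFree_iff_noZeroSMulDivisors_int.2 hM)
    have hσ' : ∑ k, ![(Real.sqrt 2 : ℂ), z, 1] k ⊗ₜ[ℤ] ![b i0, b i1, b i2] k ∈ M.baseChange ℂ := by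
      simpa [Fin.sum_univ_three] using hσ
    have hmem := M.mem_of_sum_tmul_mem_baseChange (linearIndependent_sqrt_two_complex hz) hσ'
    rw [Submodule.span_le]
    rintro _ (rfl | rfl | rfl)
    exacts [hmem 0, hmem 1, hmem 2]

/-- Let `e₀, u₁, u₂` be part of a `ℤ`-basis of a free `ℤ`-module `Λ` of finite rank,
let `z ∈ ℂ` be non-real and set `σ = √2 ⊗ e₀ + z ⊗ u₁ + 1 ⊗ u₂ ∈ ℂ ⊗ Λ`. Then the
minimal primitive submodule `M` of `Λ` with `σ ∈ M ⊗ ℂ` is `ℤe₀ ⊕ ℤu₁ ⊕ ℤu₂`. -/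
theorem minimal_primitive_submodule_eq_span
    (Λ : Type*) [AddCommGroup Λ] [Module ℤ Λ]
    {ι : Type*} [Fintype ι] (b : Module.Basis ι ℤ Λ)
    (i0 i1 i2 : ι) (h01 : i0 ≠ i1) (h02 : i0 ≠ i2) (h12 : i1 ≠ i2)
    (z : ℂ) (hz : z.im ≠ 0) :
    sInf {M : Submodule ℤ Λ | NoZeroSMulDivisors ℤ (Λ ⧸ M) ∧
        ((Real.sqrt 2 : ℂ) ⊗ₜ[ℤ] b i0 + z ⊗ₜ[ℤ] b i1 + (1 : ℂ) ⊗ₜ[ℤ] b i2)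
          ∈ M.baseChange ℂ} =
      Submodule.span ℤ ({b i0, b i1, b i2} : Set Λ) :=
  minimal_primitive_submodule_eq_span_general Λ b i0 i1 i2 z hz
end
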